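/- arXiv:1105.3822 — 2 statements merged into one kernel-verified Lean document; each statement's English description precedes it below -/
import Mathlib

section
/- Let (A; R) ∈ C (finite set system with δ ≥ 0) with associated matroid (A, cl). Then for every subset X of A which is a union of closed sets, α(X) ≥ 0, where α is defined inductively on unions of flats by α(X) = |X| − d(X) − Σ_{G flat, G ⊊ X} α(G). -/
open Finset

/-- Predimension of `X`: `|X| - |{r ∈ R : r ⊆ X}|`. -/
def delta {α : Type*} [DecidableEq α] (R : Finset (Finset α)) (X : Finset α) : ℤ :=
  (X.card : ℤ) - ((R.filter (fun r => r ⊆ X)).card : ℤ)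

/-- `F` is a flat (closed set) of the matroid on `A` with rank function `d`. -/
def IsFlat {α : Type*} [DecidableEq α] (A : Finset α) (d : Finset α → ℤ) (F : Finset α) :
    Prop :=
  F ⊆ A ∧ ∀ y ∈ A, d (insert y F) = d F → y ∈ F

open scoped Classical in
/-- Mason's α-function: `α(X) = |X| - d(X) - Σ_{G a flat, G ⊊ X} α(G)`. -/
noncomputable def alphaFn {α : Type*} (Flat : Finset α → Prop) (d : Finset α → ℤ)
    (X : Finset α) : ℤ :=
  (X.card : ℤ) - d X -
    ∑ G ∈ (X.powerset.filter (fun G => Flat G ∧ G ≠ X)).attach, alphaFn Flat d G.1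
termination_by X.card
decreasing_by
  have h := G.2
  simp only [Finset.mem_filter, Finset.mem_powerset] at h
  exact Finset.card_lt_card (lt_of_le_of_ne h.1 h.2.2)

/-- `X` is a union of flats. -/
def UnionOfFlats {α : Type*} (Flat : Finset α → Prop) (X : Finset α) : Prop :=
  ∀ x ∈ X, ∃ F, Flat F ∧ F ⊆ X ∧ x ∈ F

/-!
For a flat `F` we have `d F = δ F`, so the recursion defining `α` says that the sum of `α`
over the flats below `F` is `|R[F]|`. Sorting the relations `r ⊆ F` by the least flat `cl r`
containing them and inverting this triangular system gives `α(F) = #{r ∈ R | cl r = F}`.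
For an arbitrary `X ⊆ A` the sum of `α` over the flats strictly below `X` therefore counts
relations whose closure lies in `X`; there are at most `|R[X]| = |X| - δ X ≤ |X| - d X` of them.
-/

section Predimension

variable {α : Type*} [DecidableEq α]

theorem delta_union_add_delta_inter_le (R : Finset (Finset α)) (X Y : Finset α) :
    delta R (X ∪ Y) + delta R (X ∩ Y) ≤ delta R X + delta R Y := by
  have hcard := card_union_add_card_inter X Y
  have hinter : {r ∈ R | r ⊆ X ∩ Y} = {r ∈ R | r ⊆ X} ∩ {r ∈ R | r ⊆ Y} := by
    simp only [subset_inter_iff, filter_and]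
  have hunion : {r ∈ R | r ⊆ X} ∪ {r ∈ R | r ⊆ Y} ⊆ {r ∈ R | r ⊆ X ∪ Y} := by
    rw [← filter_or]
    exact monotone_filter_right R fun r _ h => h.elim (fun hX => hX.trans subset_union_left)
      fun hY => hY.trans subset_union_right
  have hrel := card_union_add_card_inter {r ∈ R | r ⊆ X} {r ∈ R | r ⊆ Y}
  rw [← hinter] at hrel
  have := card_le_card hunion
  unfold delta
  omega

end Predimension

section RankFunction

variable {α : Type*} [DecidableEq α] {A : Finset α} {R : Finset (Finset α)}
  {d : Finset α → ℤ}
  (hd : ∀ X ⊆ A, IsLeast {z : ℤ | ∃ Y : Finset α, X ⊆ Y ∧ Y ⊆ A ∧ z = delta R Y} (d X))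
include hd

theorem d_le_delta {X : Finset α} (hX : X ⊆ A) : d X ≤ delta R X :=
  (hd X hX).2 ⟨X, subset_rfl, hX, rfl⟩

theorem d_mono {X Y : Finset α} (hXY : X ⊆ Y) (hY : Y ⊆ A) : d X ≤ d Y := by
  obtain ⟨W, hYW, hWA, hdY⟩ := (hd Y hY).1
  exact hdY ▸ (hd X (hXY.trans hY)).2 ⟨W, hXY.trans hYW, hWA, rfl⟩

theorem d_union_add_d_inter_le {X Y : Finset α} (hX : X ⊆ A) (hY : Y ⊆ A) :
    d (X ∪ Y) + d (X ∩ Y) ≤ d X + d Y := by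
  obtain ⟨WX, hXW, hWXA, hdX⟩ := (hd X hX).1
  obtain ⟨WY, hYW, hWYA, hdY⟩ := (hd Y hY).1
  have hunion : d (X ∪ Y) ≤ delta R (WX ∪ WY) :=
    (hd _ (union_subset hX hY)).2
      ⟨WX ∪ WY, union_subset_union hXW hYW, union_subset hWXA hWYA, rfl⟩
  have hinter : d (X ∩ Y) ≤ delta R (WX ∩ WY) :=
    (hd _ (inter_subset_left.trans hX)).2
      ⟨WX ∩ WY, inter_subset_inter hXW hYW, inter_subset_left.trans hWXA, rfl⟩
  linarith [delta_union_add_delta_inter_le R WX WY]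

/-- Submodularity for `insert y C` and `H`, whose intersection is `C` when `y ∉ H`. -/
theorem mem_of_isFlat_of_d_insert_eq {C H : Finset α} {y : α} (hH : IsFlat A d H)
    (hCH : C ⊆ H) (hy : y ∈ A) (hdy : d (insert y C) = d C) : y ∈ H := by
  by_contra hyH
  refine hyH (hH.2 y hy (le_antisymm ?_ (d_mono hd (subset_insert y H) (insert_subset hy hH.1))))
  have hsub := d_union_add_d_inter_le hd (insert_subset hy (hCH.trans hH.1)) hH.1
  rw [insert_union, union_eq_right.2 hCH, insert_inter_of_notMem hyH,
    inter_eq_left.2 hCH] at hsub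
  linarith

theorem d_eq_delta_of_isFlat {F : Finset α} (hF : IsFlat A d F) : d F = delta R F := by
  obtain ⟨W, hFW, hWA, hdF⟩ := (hd F hF.1).1
  suffices hWF : W ⊆ F by rw [hdF, subset_antisymm hWF hFW]
  intro y hy
  have hyF : insert y F ⊆ A := insert_subset (hWA hy) hF.1
  have hle : d (insert y F) ≤ delta R W := (hd _ hyF).2 ⟨W, insert_subset hy hFW, hWA, rfl⟩
  exact hF.2 y (hWA hy) (le_antisymm (hdF ▸ hle) (d_mono hd (subset_insert y F) hyF))

end RankFunction

section Closure

variable {α : Type*} [DecidableEq α] {A : Finset α} {d : Finset α → ℤ}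

open scoped Classical in
noncomputable def flatClosure (A : Finset α) (d : Finset α → ℤ) (X : Finset α) : Finset α :=
  {y ∈ A | ∀ F, IsFlat A d F → X ⊆ F → y ∈ F}

theorem mem_flatClosure {X : Finset α} {y : α} :
    y ∈ flatClosure A d X ↔ y ∈ A ∧ ∀ F, IsFlat A d F → X ⊆ F → y ∈ F := by
  classical
  exact mem_filter

theorem flatClosure_subset {X F : Finset α} (hF : IsFlat A d F) (hXF : X ⊆ F) :
    flatClosure A d X ⊆ F :=
  fun _ hy => (mem_flatClosure.1 hy).2 F hF hXF

theorem subset_flatClosure {X : Finset α} (hX : X ⊆ A) : X ⊆ flatClosure A d X :=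
  fun _ hx => mem_flatClosure.2 ⟨hX hx, fun _ _ hXF => hXF hx⟩

theorem flatClosure_subset_iff {X F : Finset α} (hX : X ⊆ A) (hF : IsFlat A d F) :
    flatClosure A d X ⊆ F ↔ X ⊆ F :=
  ⟨(subset_flatClosure hX).trans, flatClosure_subset hF⟩

theorem isFlat_flatClosure {R : Finset (Finset α)}
    (hd : ∀ X ⊆ A, IsLeast {z : ℤ | ∃ Y : Finset α, X ⊆ Y ∧ Y ⊆ A ∧ z = delta R Y} (d X))
    (X : Finset α) : IsFlat A d (flatClosure A d X) :=
  ⟨fun _ hy => (mem_flatClosure.1 hy).1, fun _ hy hdy => mem_flatClosure.2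
    ⟨hy, fun _ hF hXF => mem_of_isFlat_of_d_insert_eq hd hF (flatClosure_subset hF hXF) hy hdy⟩⟩

end Closure

section AlphaFunction

variable {α : Type*}

open scoped Classical in
theorem alphaFn_eq (Flat : Finset α → Prop) (d : Finset α → ℤ) (X : Finset α) :
    alphaFn Flat d X = X.card - d X -
      ∑ G ∈ X.powerset.filter (fun G => Flat G ∧ G ≠ X), alphaFn Flat d G := by
  rw [alphaFn, sum_attach]

open scoped Classical in
theorem sum_alphaFn_of_flat {Flat : Finset α → Prop} {X : Finset α} (d : Finset α → ℤ)
    (hX : Flat X) :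
    ∑ G ∈ X.powerset.filter Flat, alphaFn Flat d G = X.card - d X := by
  have hsplit : X.powerset.filter Flat = insert X (X.powerset.filter fun G => Flat G ∧ G ≠ X) := by
    ext G
    by_cases hGX : G = X <;> simp [hGX, hX]
  rw [hsplit, sum_insert (by simp), alphaFn_eq Flat d X]
  ring

variable [DecidableEq α]

theorem eq_of_sum_powerset_filter_eq {M : Type*} [AddCancelCommMonoid M]
    {P : Finset α → Prop} [DecidablePred P] {f g : Finset α → M}
    (h : ∀ F, P F → ∑ G ∈ F.powerset.filter P, f G = ∑ G ∈ F.powerset.filter P, g G)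
    {F : Finset α} (hF : P F) : f F = g F := by
  induction F using Finset.strongInduction with
  | H F ih =>
    have hmem : F ∈ F.powerset.filter P := mem_filter.2 ⟨mem_powerset_self F, hF⟩
    have hbelow : ∑ G ∈ (F.powerset.filter P).erase F, f G =
        ∑ G ∈ (F.powerset.filter P).erase F, g G := by
      refine sum_congr rfl fun G hG => ?_
      obtain ⟨hGF, hG⟩ := mem_erase.1 hG
      obtain ⟨hGF', hPG⟩ := mem_filter.1 hG
      exact ih G (ssubset_of_subset_of_ne (mem_powerset.1 hGF') hGF) hPG
    have := h F hF
    rw [← add_sum_erase _ _ hmem, ← add_sum_erase _ _ hmem, hbelow] at this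
    exact add_right_cancel this

end AlphaFunction

section Presentation

variable {α : Type*} [DecidableEq α] {A : Finset α} {R : Finset (Finset α)}
  {d : Finset α → ℤ} (hRA : ∀ r ∈ R, r ⊆ A)
  (hd : ∀ X ⊆ A, IsLeast {z : ℤ | ∃ Y : Finset α, X ⊆ Y ∧ Y ⊆ A ∧ z = delta R Y} (d X))
include hRA hd

open scoped Classical in
theorem card_filter_subset_eq_sum_card_flatClosure {F : Finset α} (hF : IsFlat A d F) :
    #{r ∈ R | r ⊆ F} = ∑ G ∈ F.powerset.filter (IsFlat A d), #{r ∈ R | flatClosure A d r = G} := by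
  rw [sum_card_fiberwise_eq_card_filter R _ (flatClosure A d)]
  congr 1
  refine filter_congr fun r hr => ?_
  rw [mem_filter, mem_powerset, flatClosure_subset_iff (hRA r hr) hF]
  exact (and_iff_left (isFlat_flatClosure hd r)).symm

theorem alphaFn_eq_card_flatClosure_eq {F : Finset α} (hF : IsFlat A d F) :
    alphaFn (IsFlat A d) d F = #{r ∈ R | flatClosure A d r = F} := by
  classical
  refine eq_of_sum_powerset_filter_eq (P := IsFlat A d)
    (g := fun G => (#{r ∈ R | flatClosure A d r = G} : ℤ)) (fun G hG => ?_) hF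
  rw [sum_alphaFn_of_flat d hG, d_eq_delta_of_isFlat hd hG, delta,
    card_filter_subset_eq_sum_card_flatClosure hRA hd hG]
  push_cast
  ring

theorem sum_alphaFn_le_card_filter_subset {X : Finset α} {T : Finset (Finset α)}
    (hT : ∀ G ∈ T, IsFlat A d G ∧ G ⊆ X) :
    ∑ G ∈ T, alphaFn (IsFlat A d) d G ≤ #{r ∈ R | r ⊆ X} := by
  have hsum : ∑ G ∈ T, alphaFn (IsFlat A d) d G = #{r ∈ R | flatClosure A d r ∈ T} := by
    rw [← sum_card_fiberwise_eq_card_filter, Nat.cast_sum]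
    exact sum_congr rfl fun G hG => alphaFn_eq_card_flatClosure_eq hRA hd (hT G hG).1
  rw [hsum, Nat.cast_le]
  exact card_le_card <| monotone_filter_right R fun r hr hrT =>
    (subset_flatClosure (hRA r hr)).trans (hT _ hrT).2

end Presentation

theorem alpha_nonneg_of_presentation_general {α : Type*} [DecidableEq α]
    (A : Finset α) (R : Finset (Finset α))
    (hR : ∀ r ∈ R, r.Nonempty ∧ r ⊆ A)
    (d : Finset α → ℤ)
    (hd : ∀ X ⊆ A, IsLeast {z : ℤ | ∃ Y : Finset α, X ⊆ Y ∧ Y ⊆ A ∧ z = delta R Y} (d X)) :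
    ∀ X ⊆ A, UnionOfFlats (IsFlat A d) X → 0 ≤ alphaFn (IsFlat A d) d X := by
  intro X hX _
  have hrank : (#{r ∈ R | r ⊆ X} : ℤ) ≤ X.card - d X := by
    have := d_le_delta hd hX
    unfold delta at this
    linarith
  rw [alphaFn_eq, sub_nonneg]
  refine le_trans (sum_alphaFn_le_card_filter_subset (fun r hr => (hR r hr).2) hd
    fun G hG => ?_) hrank
  simp only [mem_filter, mem_powerset] at hG
  exact ⟨hG.2.1, hG.1⟩

/-- For the matroid `PG(A; R)` of a set system with `δ ≥ 0`, Mason's α-function is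
nonnegative on every union of flats. -/
theorem alpha_nonneg_of_presentation {α : Type*} [DecidableEq α]
    (A : Finset α) (R : Finset (Finset α))
    (hR : ∀ r ∈ R, r.Nonempty ∧ r ⊆ A)
    (hpos : ∀ X ⊆ A, 0 ≤ delta R X)
    (d : Finset α → ℤ)
    (hd : ∀ X ⊆ A, IsLeast {z : ℤ | ∃ Y : Finset α, X ⊆ Y ∧ Y ⊆ A ∧ z = delta R Y} (d X)) :
    ∀ X ⊆ A, UnionOfFlats (IsFlat A d) X → 0 ≤ alphaFn (IsFlat A d) d X :=
  alpha_nonneg_of_presentation_general A R hR d hd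
end

section
/- Let (A; R) be a finite set system with δ ≥ 0 and let X, Y be flats in PG(A; R). Then d(X ∪ Y) = d(X) + d(Y) − d(X ∩ Y) if and only if X ∪ Y ≤ A and R[X ∪ Y] = R[X] ∪ R[Y]. -/
open Finset

section Aux

variable {α : Type*} [DecidableEq α] (R : Finset (Finset α))

lemma delta_filter_inter (X Y : Finset α) :
    R.filter (fun r => r ⊆ X) ∩ R.filter (fun r => r ⊆ Y)
      = R.filter (fun r => r ⊆ X ∩ Y) := by
  ext r
  simp only [Finset.mem_inter, Finset.mem_filter, Finset.subset_inter_iff]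
  tauto

lemma delta_filter_union_subset (X Y : Finset α) :
    R.filter (fun r => r ⊆ X) ∪ R.filter (fun r => r ⊆ Y)
      ⊆ R.filter (fun r => r ⊆ X ∪ Y) := by
  intro r hr
  simp only [Finset.mem_union, Finset.mem_filter] at hr ⊢
  rcases hr with ⟨h1, h2⟩ | ⟨h1, h2⟩
  · exact ⟨h1, h2.trans Finset.subset_union_left⟩
  · exact ⟨h1, h2.trans Finset.subset_union_right⟩

lemma delta_key (X Y : Finset α) :
    delta R X + delta R Y - delta R (X ∪ Y) - delta R (X ∩ Y)
      = ((R.filter (fun r => r ⊆ X ∪ Y)).card : ℤ)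
        - ((R.filter (fun r => r ⊆ X) ∪ R.filter (fun r => r ⊆ Y)).card : ℤ) := by
  have h1 := Finset.card_union_add_card_inter (R.filter (fun r => r ⊆ X))
    (R.filter (fun r => r ⊆ Y))
  rw [delta_filter_inter] at h1
  have h2 := Finset.card_union_add_card_inter X Y
  unfold delta
  have h1' : ((R.filter (fun r => r ⊆ X) ∪ R.filter (fun r => r ⊆ Y)).card : ℤ)
      + ((R.filter (fun r => r ⊆ X ∩ Y)).card : ℤ)
      = ((R.filter (fun r => r ⊆ X)).card : ℤ) + ((R.filter (fun r => r ⊆ Y)).card : ℤ) := by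
    exact_mod_cast h1
  have h2' : ((X ∪ Y).card : ℤ) + ((X ∩ Y).card : ℤ) = (X.card : ℤ) + (Y.card : ℤ) := by
    exact_mod_cast h2
  linarith

lemma delta_submod (X Y : Finset α) :
    delta R (X ∪ Y) + delta R (X ∩ Y) ≤ delta R X + delta R Y := by
  have h := delta_key R X Y
  have hc : ((R.filter (fun r => r ⊆ X) ∪ R.filter (fun r => r ⊆ Y)).card : ℤ)
      ≤ ((R.filter (fun r => r ⊆ X ∪ Y)).card : ℤ) := by
    exact_mod_cast Finset.card_le_card (delta_filter_union_subset R X Y)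
  linarith

/-- A flat is self-sufficient: `d F = δ F` and `δ F ≤ δ Z` for all `F ⊆ Z ⊆ A`. -/
lemma flat_strong {A : Finset α} {d : Finset α → ℤ}
    (hd : ∀ X ⊆ A, IsLeast {z : ℤ | ∃ Y : Finset α, X ⊆ Y ∧ Y ⊆ A ∧ z = delta R Y} (d X))
    {F : Finset α} (hF : IsFlat A d F) :
    d F = delta R F ∧ ∀ Z : Finset α, F ⊆ Z → Z ⊆ A → delta R F ≤ delta R Z := by
  obtain ⟨⟨Z, hFZ, hZA, hdZ⟩, hlb⟩ := hd F hF.1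
  have hZF : Z ⊆ F := by
    intro y hyZ
    apply hF.2 y (hZA hyZ)
    have hyA : insert y F ⊆ A := Finset.insert_subset (hZA hyZ) hF.1
    have h1 : d (insert y F) ≤ d F :=
      (hd (insert y F) hyA).2 ⟨Z, Finset.insert_subset hyZ hFZ, hZA, hdZ⟩
    have h2 : d F ≤ d (insert y F) := by
      obtain ⟨W, hW1, hW2, hW3⟩ := (hd (insert y F) hyA).1
      exact hlb ⟨W, (Finset.subset_insert y F).trans hW1, hW2, hW3⟩
    omega
  have hZFeq : Z = F := Finset.Subset.antisymm hZF hFZ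
  subst hZFeq
  refine ⟨hdZ, fun W hFW hWA => ?_⟩
  have := hlb ⟨W, hFW, hWA, rfl⟩
  linarith [hdZ ▸ this]

/-- Intersecting with a self-sufficient set does not increase `δ`. -/
lemma strong_inter {A : Finset α} {X : Finset α} (hXA : X ⊆ A)
    (hstr : ∀ Z : Finset α, X ⊆ Z → Z ⊆ A → delta R X ≤ delta R Z)
    (W : Finset α) (hWA : W ⊆ A) :
    delta R (W ∩ X) ≤ delta R W := by
  have hsub := delta_submod R W X
  have h := hstr (W ∪ X) Finset.subset_union_right (Finset.union_subset hWA hXA)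
  linarith

end Aux

/-- Flats `X`, `Y` are independent over `X ∩ Y` iff `X ∪ Y` is self-sufficient and
`X`, `Y` are freely amalgamated over `X ∩ Y`. -/
theorem independent_iff_selfSufficient_free {α : Type*} [DecidableEq α]
    (A : Finset α) (R : Finset (Finset α))
    (hR : ∀ r ∈ R, r.Nonempty ∧ r ⊆ A)
    (hpos : ∀ X ⊆ A, 0 ≤ delta R X)
    (d : Finset α → ℤ)
    (hd : ∀ X ⊆ A, IsLeast {z : ℤ | ∃ Y : Finset α, X ⊆ Y ∧ Y ⊆ A ∧ z = delta R Y} (d X))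
    (X Y : Finset α) (hX : IsFlat A d X) (hY : IsFlat A d Y) :
    d (X ∪ Y) = d X + d Y - d (X ∩ Y) ↔
      ((∀ Z : Finset α, X ∪ Y ⊆ Z → Z ⊆ A → delta R (X ∪ Y) ≤ delta R Z) ∧
        R.filter (fun r => r ⊆ X ∪ Y) =
          R.filter (fun r => r ⊆ X) ∪ R.filter (fun r => r ⊆ Y)) := by
  obtain ⟨hdX, hXstr⟩ := flat_strong R hd hX
  obtain ⟨hdY, hYstr⟩ := flat_strong R hd hY
  have hXA := hX.1
  have hYA := hY.1
  have hXYA : X ∪ Y ⊆ A := Finset.union_subset hXA hYA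
  have hXiYA : X ∩ Y ⊆ A := Finset.inter_subset_left.trans hXA
  -- d (X ∩ Y) = δ (X ∩ Y)
  have hdInt : d (X ∩ Y) = delta R (X ∩ Y) := by
    have hle : d (X ∩ Y) ≤ delta R (X ∩ Y) :=
      (hd (X ∩ Y) hXiYA).2 ⟨X ∩ Y, Finset.Subset.rfl, hXiYA, rfl⟩
    have hge : delta R (X ∩ Y) ≤ d (X ∩ Y) := by
      obtain ⟨W, hW1, hW2, hW3⟩ := (hd (X ∩ Y) hXiYA).1
      have e1 : delta R (W ∩ X) ≤ delta R W := strong_inter R hXA hXstr W hW2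
      have e2 : delta R ((W ∩ X) ∩ Y) ≤ delta R (W ∩ X) :=
        strong_inter R hYA hYstr (W ∩ X) (Finset.inter_subset_left.trans hW2)
      have e3 : (W ∩ X) ∩ Y = X ∩ Y := by
        apply Finset.Subset.antisymm
        · exact Finset.inter_subset_inter Finset.inter_subset_right Finset.Subset.rfl
        · intro a ha
          simp only [Finset.mem_inter] at ha ⊢
          exact ⟨⟨hW1 (Finset.mem_inter.mpr ha), ha.1⟩, ha.2⟩
      rw [e3] at e2
      linarith [hW3 ▸ (le_refl (d (X ∩ Y)))]
    omega
  have hle_union : d (X ∪ Y) ≤ delta R (X ∪ Y) :=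
    (hd (X ∪ Y) hXYA).2 ⟨X ∪ Y, Finset.Subset.rfl, hXYA, rfl⟩
  have hkey := delta_key R X Y
  have hcardle : ((R.filter (fun r => r ⊆ X) ∪ R.filter (fun r => r ⊆ Y)).card : ℤ)
      ≤ ((R.filter (fun r => r ⊆ X ∪ Y)).card : ℤ) := by
    exact_mod_cast Finset.card_le_card (delta_filter_union_subset R X Y)
  constructor
  · intro h
    rw [hdX, hdY, hdInt] at h
    -- chain of equalities
    have hsub : delta R (X ∪ Y) + delta R (X ∩ Y) ≤ delta R X + delta R Y :=
      delta_submod R X Y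
    have heq1 : d (X ∪ Y) = delta R (X ∪ Y) := by linarith
    have heq2 : delta R (X ∪ Y) + delta R (X ∩ Y) = delta R X + delta R Y := by linarith
    constructor
    · intro Z hZ1 hZ2
      have := (hd (X ∪ Y) hXYA).2 ⟨Z, hZ1, hZ2, rfl⟩
      linarith
    · symm
      apply Finset.eq_of_subset_of_card_le (delta_filter_union_subset R X Y)
      have : ((R.filter (fun r => r ⊆ X ∪ Y)).card : ℤ)
          = ((R.filter (fun r => r ⊆ X) ∪ R.filter (fun r => r ⊆ Y)).card : ℤ) := by
        linarith
      exact_mod_cast le_of_eq this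
  · rintro ⟨hss, hfree⟩
    have heq1 : d (X ∪ Y) = delta R (X ∪ Y) := by
      have hge : delta R (X ∪ Y) ≤ d (X ∪ Y) := by
        obtain ⟨W, hW1, hW2, hW3⟩ := (hd (X ∪ Y) hXYA).1
        rw [hW3]
        exact hss W hW1 hW2
      omega
    have : delta R X + delta R Y - delta R (X ∪ Y) - delta R (X ∩ Y) = 0 := by
      rw [hkey, hfree]
      ring
    rw [hdX, hdY, hdInt, heq1]
    linarith
end
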